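/- arXiv:1210.5065 — 4 statements merged into one kernel-verified Lean document; each statement's English description precedes it below -/
import Mathlib

section
/- Let (X₀, <₀) and (X₁, <₁) be sets with strict (transitive, irreflexive) order relations, and let < be the product order on X₀ × X₁ defined by (x₀,x₁) < (y₀,y₁) iff x₀ <₀ y₀ and x₁ <₁ y₁. Then < is well-founded if and only if at least one of <₀, <₁ is well-founded. -/
/-- The product of two strict orders is well founded iff at least one of them is. -/
theorem product_strict_order_wf_iff {X₀ X₁ : Type*}
    (r₀ : X₀ → X₀ → Prop) (r₁ : X₁ → X₁ → Prop)
    (h₀t : Transitive r₀) (h₀i : Irreflexive r₀)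
    (h₁t : Transitive r₁) (h₁i : Irreflexive r₁) :
    WellFounded (fun p q : X₀ × X₁ => r₀ p.1 q.1 ∧ r₁ p.2 q.2) ↔
      (WellFounded r₀ ∨ WellFounded r₁) := by
  haveI : IsTrans X₀ r₀ := ⟨h₀t⟩
  haveI : IsTrans X₁ r₁ := ⟨h₁t⟩
  haveI : IsIrrefl X₀ r₀ := ⟨h₀i⟩
  haveI : IsIrrefl X₁ r₁ := ⟨h₁i⟩
  haveI : IsStrictOrder X₀ r₀ := {}
  haveI : IsStrictOrder X₁ r₁ := {}
  haveI : IsTrans (X₀ × X₁) (fun p q => r₀ p.1 q.1 ∧ r₁ p.2 q.2) :=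
    ⟨fun _ _ _ h h' => ⟨h₀t h.1 h'.1, h₁t h.2 h'.2⟩⟩
  haveI : IsIrrefl (X₀ × X₁) (fun p q => r₀ p.1 q.1 ∧ r₁ p.2 q.2) :=
    ⟨fun p h => h₀i p.1 h.1⟩
  haveI : IsStrictOrder (X₀ × X₁) (fun p q => r₀ p.1 q.1 ∧ r₁ p.2 q.2) := {}
  constructor
  · intro h
    by_contra hc
    push_neg at hc
    obtain ⟨h0, h1⟩ := hc
    rw [RelEmbedding.wellFounded_iff_isEmpty, not_isEmpty_iff] at h0 h1
    obtain ⟨f⟩ := h0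
    obtain ⟨g⟩ := h1
    refine RelEmbedding.not_wellFounded
      (RelEmbedding.natGT (fun n => (f n, g n)) ?_) h
    · intro n
      exact ⟨f.map_rel_iff.2 (Nat.lt_succ_self n), g.map_rel_iff.2 (Nat.lt_succ_self n)⟩
  · rintro (h | h)
    · exact Subrelation.wf (fun hpq => hpq.1) (InvImage.wf Prod.fst h)
    · exact Subrelation.wf (fun hpq => hpq.2) (InvImage.wf Prod.snd h)
end

section
/- In a realizability-style abstract machine with combinators B and C satisfying C ⋆ ξ·η·ζ·π ≻ ξ⋆ζ·η·π and B ⋆ ξ·η·ζ·π ≻ ξ⋆(η)ζ·π and (ξ)η ⋆ π ≻ ξ ⋆ η·π, one has for every n ∈ ℕ, φ, ζ, α ∈ Λ and π ∈ Π: ((C B φ))ⁿζ ⋆ α·π ≻ ζ ⋆ (φ)ⁿα·π, where tⁿu denotes n-fold application of t to u and ≻ is the reflexive–transitive execution preorder. -/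
/-- Lemma `phi^n-alpha`(ii): `(CBφ)ⁿζ ⋆ α·π ≻ ζ ⋆ (φ)ⁿα·π`, where `≻` is the
reflexive–transitive execution preorder generated by the rules for application,
`C` and `B`. -/
theorem CB_iterate_reduction {Λ Stk : Type*} (app : Λ → Λ → Λ) (push : Λ → Stk → Stk)
    (B C : Λ) (red : Λ × Stk → Λ × Stk → Prop)
    (hrefl : ∀ p, red p p)
    (htrans : ∀ {p q r}, red p q → red q r → red p r)
    (hpush : ∀ (ξ η : Λ) (π : Stk), red (app ξ η, π) (ξ, push η π))
    (hC : ∀ (ξ η ζ : Λ) (π : Stk),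
      red (C, push ξ (push η (push ζ π))) (ξ, push ζ (push η π)))
    (hB : ∀ (ξ η ζ : Λ) (π : Stk),
      red (B, push ξ (push η (push ζ π))) (ξ, push (app η ζ) π)) :
    ∀ (n : ℕ) (φ ζ α : Λ) (π : Stk),
      red ((app (app (app C B) φ))^[n] ζ, push α π) (ζ, push ((app φ)^[n] α) π) := by
  intro n
  induction n with
  | zero => intro φ ζ α π; simpa using hrefl _
  | succ n ih =>
    intro φ ζ α π
    rw [Function.iterate_succ_apply]
    have h1 : red ((app (app (app C B) φ))^[n] (app (app (app C B) φ) ζ), push α π)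
        (app (app (app C B) φ) ζ, push ((app φ)^[n] α) π) := ih φ _ α π
    refine htrans h1 ?_
    refine htrans (hpush _ _ _) ?_
    refine htrans (hpush _ _ _) ?_
    refine htrans (hpush _ _ _) ?_
    refine htrans (hC _ _ _ _) ?_
    refine htrans (hB _ _ _ _) ?_
    rw [Function.iterate_succ_apply']
    exact hrefl _
end

section
/- Let S be a set of 'processes' with a reduction preorder ≻, let d be a distinguished element-former producing processes d⋆n·π, and for j ∈ {0,1} let ⊥_j be the least subset P of S satisfying: (1) d⋆j·π ∈ P for every stack π; (2) P is closed under anti-reduction (if ξ⋆π ≻ ξ'⋆π' and ξ'⋆π' ∈ P then ξ⋆π ∈ P); (3) if at least two of ξ⋆π, η⋆π, ζ⋆π are in P then d⋆2·ξ·η·ζ·π ∈ P. Assume the machine's reduction is deterministic on d-headed processes in the sense that d⋆ρ ≻ q implies q = d⋆ρ. Then ⊥_j is closed under reduction: if ξ⋆π ∈ ⊥_j and ξ⋆π ≻ ξ'⋆π' then ξ'⋆π' ∈ ⊥_j. -/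
/-- `BotSet push step d nj n2` is the least set of processes containing `d⋆nj·π` for every
stack `π`, closed under anti-reduction (for the preorder generated by `step`), and
closed under the majority rule for `d⋆n2·ξ·η·ζ·π`. -/
inductive BotSet {Λ Stk : Type*} (push : Λ → Stk → Stk)
    (step : Λ × Stk → Λ × Stk → Prop) (d nj n2 : Λ) : Λ × Stk → Prop
  | seed (π : Stk) : BotSet push step d nj n2 (d, push nj π)
  | anti {p q : Λ × Stk} : Relation.ReflTransGen step p q →
      BotSet push step d nj n2 q → BotSet push step d nj n2 p
  | maj12 {ξ η ζ : Λ} {π : Stk} : BotSet push step d nj n2 (ξ, π) →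
      BotSet push step d nj n2 (η, π) →
      BotSet push step d nj n2 (d, push n2 (push ξ (push η (push ζ π))))
  | maj13 {ξ η ζ : Λ} {π : Stk} : BotSet push step d nj n2 (ξ, π) →
      BotSet push step d nj n2 (ζ, π) →
      BotSet push step d nj n2 (d, push n2 (push ξ (push η (push ζ π))))
  | maj23 {ξ η ζ : Λ} {π : Stk} : BotSet push step d nj n2 (η, π) →
      BotSet push step d nj n2 (ζ, π) →
      BotSet push step d nj n2 (d, push n2 (push ξ (push η (push ζ π))))


private lemma det_confluence {α : Type*} {step : α → α → Prop}
    (hdet : ∀ {p q q'}, step p q → step p q' → q = q') :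
    ∀ {p a b}, Relation.ReflTransGen step p a → Relation.ReflTransGen step p b →
      Relation.ReflTransGen step a b ∨ Relation.ReflTransGen step b a := by
  intro p a b hpa
  induction hpa using Relation.ReflTransGen.head_induction_on generalizing b with
  | refl => intro h; exact Or.inl h
  | head hps hsa ih =>
    intro hpb
    cases hpb.cases_head with
    | inl h => subst h; exact Or.inr (Relation.ReflTransGen.head hps hsa)
    | inr h =>
      obtain ⟨c, hpc, hcb⟩ := h
      cases hdet hps hpc
      exact ih hcb

/-- If the one-step reduction is deterministic and `d` is a halting instruction
(`d`-headed processes do not reduce), then `⊥_j` is closed under reduction. -/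
theorem Bot_closed_under_reduction {Λ Stk : Type*} (push : Λ → Stk → Stk)
    (step : Λ × Stk → Λ × Stk → Prop) (d nj n2 : Λ)
    (hdet : ∀ {p q q'}, step p q → step p q' → q = q')
    (hhalt : ∀ (ρ : Stk) (q : Λ × Stk), ¬ step (d, ρ) q) :
    ∀ p q : Λ × Stk, BotSet push step d nj n2 p → Relation.ReflTransGen step p q →
      BotSet push step d nj n2 q := by
  intro p q hp hpq
  induction hp generalizing q with
  | seed π =>
    cases hpq.cases_head with
    | inl h => subst h; exact BotSet.seed π
    | inr h => obtain ⟨c, hc, _⟩ := h; exact absurd hc (hhalt _ _)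
  | anti hpr _ ih =>
    rcases @det_confluence _ step hdet _ _ _ hpq hpr with h | h
    · exact BotSet.anti h (ih _ .refl)
    · exact ih _ h
  | maj12 h1 h2 ih1 ih2 =>
    cases hpq.cases_head with
    | inl h => subst h; exact BotSet.maj12 (ih1 _ .refl) (ih2 _ .refl)
    | inr h => obtain ⟨c, hc, _⟩ := h; exact absurd hc (hhalt _ _)
  | maj13 h1 h2 ih1 ih2 =>
    cases hpq.cases_head with
    | inl h => subst h; exact BotSet.maj13 (ih1 _ .refl) (ih2 _ .refl)
    | inr h => obtain ⟨c, hc, _⟩ := h; exact absurd hc (hhalt _ _)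
  | maj23 h1 h2 ih1 ih2 =>
    cases hpq.cases_head with
    | inl h => subst h; exact BotSet.maj23 (ih1 _ .refl) (ih2 _ .refl)
    | inr h => obtain ⟨c, hc, _⟩ := h; exact absurd hc (hhalt _ _)
end

section
/- With the same inductive definitions as above, restricted to processes built over a single stack constant, the two least sets ⊥_0 and ⊥_1 (seeded respectively by the processes d⋆0·π and d⋆1·π) are disjoint: ⊥_0 ∩ ⊥_1 = ∅. -/
section Aux

variable {Λ Stk : Type*} {push : Λ → Stk → Stk} {step : Λ × Stk → Λ × Stk → Prop} {d nj n2 : Λ}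

lemma halted_fixed (hhalt : ∀ (ρ : Stk) (q : Λ × Stk), ¬ step (d, ρ) q) {ρ : Stk}
    {q : Λ × Stk} (h : Relation.ReflTransGen step (d, ρ) q) : q = (d, ρ) := by
  rcases Relation.ReflTransGen.cases_head h with rfl | ⟨q', hs, _⟩
  · rfl
  · exact absurd hs (hhalt ρ q')

lemma semiconfluent (hdet : ∀ {p q q'}, step p q → step p q' → q = q')
    {p q r : Λ × Stk} (hq : Relation.ReflTransGen step p q)
    (hr : Relation.ReflTransGen step p r) :
    Relation.ReflTransGen step q r ∨ Relation.ReflTransGen step r q := by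
  induction hq using Relation.ReflTransGen.head_induction_on with
  | refl => left; exact hr
  | head hs _ ih =>
    rcases Relation.ReflTransGen.cases_head hr with rfl | ⟨r', hs', hr'⟩
    · right; exact Relation.ReflTransGen.head hs (by assumption)
    · exact ih (hdet hs hs' ▸ hr')

lemma BotSet.fwd (hdet : ∀ {p q q'}, step p q → step p q' → q = q')
    (hhalt : ∀ (ρ : Stk) (q : Λ × Stk), ¬ step (d, ρ) q)
    {p q : Λ × Stk} (h : BotSet push step d nj n2 p)
    (hq : Relation.ReflTransGen step p q) : BotSet push step d nj n2 q := by
  induction h generalizing q with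
  | seed π => rw [halted_fixed hhalt hq]; exact .seed π
  | anti hpr _ ih =>
    rcases semiconfluent (step := step) hdet hq hpr with h' | h'
    · exact .anti h' (by assumption)
    · exact ih h'
  | maj12 h1 h2 _ _ => rw [halted_fixed hhalt hq]; exact .maj12 h1 h2
  | maj13 h1 h2 _ _ => rw [halted_fixed hhalt hq]; exact .maj13 h1 h2
  | maj23 h1 h2 _ _ => rw [halted_fixed hhalt hq]; exact .maj23 h1 h2

lemma BotSet.halted_cases (hhalt : ∀ (ρ : Stk) (q : Λ × Stk), ¬ step (d, ρ) q)
    {p : Λ × Stk} (h : BotSet push step d nj n2 p) :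
    ∀ ρ, p = (d, ρ) →
      (∃ π, ρ = push nj π) ∨
      ∃ ξ η ζ π, ρ = push n2 (push ξ (push η (push ζ π))) ∧
        ((BotSet push step d nj n2 (ξ, π) ∧ BotSet push step d nj n2 (η, π)) ∨
         (BotSet push step d nj n2 (ξ, π) ∧ BotSet push step d nj n2 (ζ, π)) ∨
         (BotSet push step d nj n2 (η, π) ∧ BotSet push step d nj n2 (ζ, π))) := by
  induction h with
  | seed π => rintro ρ h; left; exact ⟨π, (Prod.mk.injEq .. ▸ h).2.symm⟩
  | anti hpq _ ih =>
    rintro ρ rfl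
    exact ih ρ (halted_fixed hhalt hpq)
  | maj12 h1 h2 _ _ =>
    rintro ρ h
    right
    exact ⟨_, _, _, _, (Prod.mk.injEq .. ▸ h).2.symm, .inl ⟨h1, h2⟩⟩
  | maj13 h1 h2 _ _ =>
    rintro ρ h
    right
    exact ⟨_, _, _, _, (Prod.mk.injEq .. ▸ h).2.symm, .inr (.inl ⟨h1, h2⟩)⟩
  | maj23 h1 h2 _ _ =>
    rintro ρ h
    right
    exact ⟨_, _, _, _, (Prod.mk.injEq .. ▸ h).2.symm, .inr (.inr ⟨h1, h2⟩)⟩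

end Aux

/-- `⊥_0 ∩ ⊥_1 = ∅`: with a deterministic step relation, `d` a halting instruction,
`push` injective and pairwise distinct numerals `0`, `1`, `2`, the least sets seeded
respectively by `d⋆0·π` and `d⋆1·π` are disjoint. -/
theorem BotSet_disjoint {Λ Stk : Type*} (push : Λ → Stk → Stk)
    (step : Λ × Stk → Λ × Stk → Prop) (d n0 n1 n2 : Λ)
    (hdet : ∀ {p q q'}, step p q → step p q' → q = q')
    (hhalt : ∀ (ρ : Stk) (q : Λ × Stk), ¬ step (d, ρ) q)
    (hpush : ∀ (ξ ξ' : Λ) (π π' : Stk), push ξ π = push ξ' π' → ξ = ξ' ∧ π = π')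
    (h01 : n0 ≠ n1) (h02 : n0 ≠ n2) (h12 : n1 ≠ n2) :
    ∀ p : Λ × Stk,
      ¬ (BotSet push step d n0 n2 p ∧ BotSet push step d n1 n2 p) := by
  rintro p ⟨h0, h1⟩
  induction h0 with
  | seed π =>
    rcases h1.halted_cases hhalt _ rfl with ⟨π', e⟩ | ⟨ξ, η, ζ, π', e, _⟩
    · exact h01 (hpush _ _ _ _ e).1
    · exact h02 (hpush _ _ _ _ e).1
  | anti hpq hq ih => exact ih (BotSet.fwd (step := step) hdet hhalt h1 hpq)
  | maj12 hξ hη ihξ ihη =>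
    rcases h1.halted_cases hhalt _ rfl with ⟨π', e⟩ | ⟨ξ', η', ζ', π', e, hm⟩
    · exact h12 ((hpush _ _ _ _ e).1).symm
    · obtain ⟨-, e⟩ := hpush _ _ _ _ e
      obtain ⟨e1, e⟩ := hpush _ _ _ _ e
      obtain ⟨e2, e⟩ := hpush _ _ _ _ e
      obtain ⟨e3, e4⟩ := hpush _ _ _ _ e
      cases e1; cases e2; cases e3; cases e4
      rcases hm with ⟨a, b⟩ | ⟨a, b⟩ | ⟨a, b⟩
      · exact ihξ a
      · exact ihξ a
      · exact ihη a
  | maj13 hξ hζ ihξ ihζ =>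
    rcases h1.halted_cases hhalt _ rfl with ⟨π', e⟩ | ⟨ξ', η', ζ', π', e, hm⟩
    · exact h12 ((hpush _ _ _ _ e).1).symm
    · obtain ⟨-, e⟩ := hpush _ _ _ _ e
      obtain ⟨e1, e⟩ := hpush _ _ _ _ e
      obtain ⟨e2, e⟩ := hpush _ _ _ _ e
      obtain ⟨e3, e4⟩ := hpush _ _ _ _ e
      cases e1; cases e2; cases e3; cases e4
      rcases hm with ⟨a, b⟩ | ⟨a, b⟩ | ⟨a, b⟩
      · exact ihξ a
      · exact ihξ a
      · exact ihζ b
  | maj23 hη hζ ihη ihζ =>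
    rcases h1.halted_cases hhalt _ rfl with ⟨π', e⟩ | ⟨ξ', η', ζ', π', e, hm⟩
    · exact h12 ((hpush _ _ _ _ e).1).symm
    · obtain ⟨-, e⟩ := hpush _ _ _ _ e
      obtain ⟨e1, e⟩ := hpush _ _ _ _ e
      obtain ⟨e2, e⟩ := hpush _ _ _ _ e
      obtain ⟨e3, e4⟩ := hpush _ _ _ _ e
      cases e1; cases e2; cases e3; cases e4
      rcases hm with ⟨a, b⟩ | ⟨a, b⟩ | ⟨a, b⟩
      · exact ihη b
      · exact ihζ b
      · exact ihη a
end
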